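/- Let h(z) = z + Σ_{l≥1} h_l z^{-l} be a monic formal Laurent series and H₊ the span of its Faà di Bruno iterates. For each j ≥ 0 there exists a unique element H^{(j)} ∈ H₊ of the form H^{(j)} = Σ_{l=0}^{j} c_l^j h^{(l)} (with coefficients c_l^j independent of z) having the asymptotic expansion H^{(j)} = z^j + Σ_{k≥1} H^j_k z^{-k} (i.e., no terms in z^m for 0 ≤ m ≤ j−1). -/

import Mathlib

/-!
Write `z^m` for the Hahn-series index `-m`. Since `h = z + O(z⁻¹)` and `∂_x` does not raise
degrees, every iterate is monic: `h⁽ˡ⁾ = z^l + (lower powers)`. So the coefficients of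
`z⁰, …, z^j` in `∑_{l ≤ j} c_l h⁽ˡ⁾` form a unitriangular system in the `c_l`. For existence,
`H⁽ʲ⁾ = h⁽ʲ⁾ - ∑_{k < j} [z^k] h⁽ʲ⁾ • H⁽ᵏ⁾` by strong induction; for uniqueness, the coefficient of
`z^(n-1)` in a combination of `h⁽⁰⁾, …, h⁽ⁿ⁻¹⁾` is the coefficient of `h⁽ⁿ⁻¹⁾`, so peeling off the
top term shows that a combination without `z⁰, …, z^(n-1)` vanishes.
-/

variable {R : Type*} [CommRing R]

/-- Coefficientwise action of `∂_x` on Laurent series. -/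
noncomputable def liftD (d : R →+ R) (f : HahnSeries ℤ R) : HahnSeries ℤ R where
  coeff n := d (f.coeff n)
  isPWO_support' := f.isPWO_support'.mono (by
    intro n hn
    simp only [Function.mem_support] at hn ⊢
    intro h0
    exact hn (by rw [h0, map_zero]))

/-- Faà di Bruno iterates: `h⁽⁰⁾ = 1`, `h⁽ʲ⁺¹⁾ = (∂_x + h)·h⁽ʲ⁾`. -/
noncomputable def fdb (d : R →+ R) (h : HahnSeries ℤ R) : ℕ → HahnSeries ℤ R
  | 0 => 1
  | j + 1 => liftD d (fdb d h j) + h * fdb d h j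

namespace HahnSeries

variable {Γ S : Type*} [AddCommMonoid Γ] [LinearOrder Γ] [IsOrderedCancelAddMonoid Γ]
  [NonUnitalNonAssocSemiring S] {x y : HahnSeries Γ S} {a b : Γ}

theorem coeff_mul_of_lt_add (hx : ∀ i < a, x.coeff i = 0) (hy : ∀ i < b, y.coeff i = 0)
    {n : Γ} (hn : n < a + b) : (x * y).coeff n = 0 := by
  have hxy : ((a + b : Γ) : WithTop Γ) ≤ (x * y).orderTop :=
    calc ((a + b : Γ) : WithTop Γ) = (a : WithTop Γ) + b := WithTop.coe_add a b
      _ ≤ x.orderTop + y.orderTop := by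
        gcongr <;> refine le_orderTop_iff_forall.mpr fun i hi => ?_
        exacts [hx i (WithTop.coe_lt_coe.mp hi), hy i (WithTop.coe_lt_coe.mp hi)]
      _ ≤ (x * y).orderTop := orderTop_add_le_mul
  exact coeff_eq_zero_of_lt_orderTop ((WithTop.coe_lt_coe.mpr hn).trans_le hxy)

theorem coeff_mul_add_of_forall_lt (hx : ∀ i < a, x.coeff i = 0)
    (hy : ∀ i < b, y.coeff i = 0) : (x * y).coeff (a + b) = x.coeff a * y.coeff b := by
  rw [coeff_mul, ← Finset.sum_singleton (fun p : Γ × Γ => x.coeff p.1 * y.coeff p.2) (a, b)]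
  refine Finset.sum_subset (fun p hp => ?_) (fun p hab hp => ?_)
  · obtain ⟨hi, hj, hs⟩ := Finset.mem_antidiagonal.mp hp
    have ha : a ≤ p.1 := not_lt.mp (mt (hx _) hi)
    have hb : b ≤ p.2 := not_lt.mp (mt (hy _) hj)
    have ha' : p.1 = a := ha.eq_or_lt.elim Eq.symm fun h =>
      absurd hs (add_lt_add_of_lt_of_le h hb).ne'
    rw [ha', add_right_inj] at hs
    exact Finset.mem_singleton.mpr (Prod.ext ha' hs)
  · obtain rfl := Finset.mem_singleton.mp hab
    by_contra hne
    exact hp (Finset.mem_antidiagonal.mpr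
      ⟨left_ne_zero_of_mul hne, right_ne_zero_of_mul hne, rfl⟩)

end HahnSeries

open HahnSeries Finset

variable (d : R →+ R) {h : HahnSeries ℤ R}

@[simp]
theorem liftD_coeff (f : HahnSeries ℤ R) (n : ℤ) : (liftD d f).coeff n = d (f.coeff n) := rfl

theorem coeff_fdb_of_lt (h_low : ∀ n < -1, h.coeff n = 0) (l : ℕ) :
    ∀ n < -(l : ℤ), (fdb d h l).coeff n = 0 := by
  induction l with
  | zero => intro n hn; simp [fdb, coeff_one, show n ≠ 0 by omega]
  | succ l ih =>
    intro n hn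
    have hmul := coeff_mul_of_lt_add h_low ih (n := n) (by push_cast at hn; omega)
    simp only [fdb, coeff_add, liftD_coeff, ih n (by omega), map_zero, hmul, add_zero]

theorem coeff_fdb_neg_self (h_lead : h.coeff (-1) = 1) (h_low : ∀ n < -1, h.coeff n = 0)
    (l : ℕ) : (fdb d h l).coeff (-l) = 1 := by
  induction l with
  | zero => simp [fdb]
  | succ l ih =>
    have hmul := coeff_mul_add_of_forall_lt h_low (coeff_fdb_of_lt d h_low l)
    rw [h_lead, ih, one_mul, ← neg_add, add_comm] at hmul
    simp only [fdb, coeff_add, liftD_coeff, Nat.cast_succ, hmul,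
      coeff_fdb_of_lt d h_low l (-(l + 1)) (by omega), map_zero, zero_add]

theorem coeff_fdb_neg_natCast_of_le (h_lead : h.coeff (-1) = 1)
    (h_low : ∀ n < -1, h.coeff n = 0) {l m : ℕ} (hlm : l ≤ m) :
    (fdb d h l).coeff (-m) = if m = l then 1 else 0 := by
  split_ifs with hml
  · rw [hml, coeff_fdb_neg_self d h_lead h_low]
  · exact coeff_fdb_of_lt d h_low l _ (by omega)

variable (h)

/-- The part of `H₊` spanned by `h⁽⁰⁾, …, h⁽ⁿ⁻¹⁾`. -/
noncomputable def fdbSpan (n : ℕ) : Submodule R (HahnSeries ℤ R) :=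
  Submodule.span R (fdb d h '' ↑(range n))

variable {d h}

theorem mem_fdbSpan_iff {n : ℕ} {H : HahnSeries ℤ R} :
    H ∈ fdbSpan d h n ↔ ∃ c : ℕ → R, H = ∑ l ∈ range n, c l • fdb d h l := by
  simp only [fdbSpan, Submodule.mem_span_image_finset_iff_exists_fun', eq_comm]

theorem fdb_mem_fdbSpan {l n : ℕ} (hln : l < n) : fdb d h l ∈ fdbSpan d h n :=
  Submodule.subset_span ⟨l, mem_range.mpr hln, rfl⟩

theorem fdbSpan_mono {m n : ℕ} (hmn : m ≤ n) : fdbSpan d h m ≤ fdbSpan d h n :=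
  Submodule.span_mono (Set.image_mono (by simpa using range_subset_range.mpr hmn))

theorem mem_fdbSpan_succ_iff {n : ℕ} {H : HahnSeries ℤ R} :
    H ∈ fdbSpan d h (n + 1) ↔ ∃ a : R, ∃ G ∈ fdbSpan d h n, H = a • fdb d h n + G := by
  rw [fdbSpan, range_add_one, coe_insert, Set.image_insert_eq, Submodule.mem_span_insert]
  rfl

theorem coeff_eq_zero_of_mem_fdbSpan (h_low : ∀ n < -1, h.coeff n = 0) {n : ℕ}
    {H : HahnSeries ℤ R} (hH : H ∈ fdbSpan d h n) {m : ℤ} (hm : m ≤ -n) : H.coeff m = 0 := by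
  induction hH using Submodule.span_induction with
  | mem _ hf =>
    obtain ⟨l, hl, rfl⟩ := hf
    exact coeff_fdb_of_lt d h_low l m (by simp at hl; omega)
  | zero => rfl
  | add _ _ _ _ hf hg => rw [coeff_add, hf, hg, add_zero]
  | smul a _ _ hf => rw [coeff_smul, hf, smul_zero]

theorem eq_zero_of_mem_fdbSpan (h_lead : h.coeff (-1) = 1) (h_low : ∀ n < -1, h.coeff n = 0)
    {n : ℕ} {H : HahnSeries ℤ R} (hH : H ∈ fdbSpan d h n)
    (hcoeff : ∀ k < n, H.coeff (-k) = 0) : H = 0 := by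
  induction n generalizing H with
  | zero => simpa [fdbSpan] using hH
  | succ n ih =>
    obtain ⟨a, G, hG, rfl⟩ := mem_fdbSpan_succ_iff.mp hH
    have ha : a = 0 := by
      simpa [coeff_fdb_neg_self d h_lead h_low, coeff_eq_zero_of_mem_fdbSpan h_low hG le_rfl]
        using hcoeff n n.lt_succ_self
    subst ha
    rw [zero_smul, zero_add] at hcoeff ⊢
    exact ih hG fun k hk => hcoeff k (by omega)

theorem exists_mem_fdbSpan_coeff_eq_ite (h_lead : h.coeff (-1) = 1)
    (h_low : ∀ n < -1, h.coeff n = 0) (j : ℕ) :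
    ∃ H ∈ fdbSpan d h (j + 1), ∀ m : ℕ, H.coeff (-m) = if m = j then 1 else 0 := by
  induction j using Nat.strong_induction_on with
  | _ j ih =>
    choose! H hH_mem hH_coeff using ih
    refine ⟨fdb d h j - ∑ k ∈ range j, (fdb d h j).coeff (-k) • H k, ?_, fun m => ?_⟩
    · refine sub_mem (fdb_mem_fdbSpan j.lt_succ_self) (sum_mem fun k hk => ?_)
      have hkj : k < j := mem_range.mp hk
      exact Submodule.smul_mem _ _ (fdbSpan_mono (by omega) (hH_mem k hkj))
    · have hsum : ∑ k ∈ range j, (fdb d h j).coeff (-k) * (H k).coeff (-m)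
          = if m ∈ range j then (fdb d h j).coeff (-m) else 0 := by
        refine (sum_congr rfl fun k hk => ?_).trans
          (sum_ite_eq (range j) m fun k => (fdb d h j).coeff (-k))
        rw [hH_coeff k (mem_range.mp hk), mul_ite, mul_one, mul_zero]
      simp only [coeff_sub, coeff_sum, coeff_smul, smul_eq_mul, hsum, mem_range]
      by_cases hmj : m < j
      · simp [hmj, hmj.ne]
      · rw [if_neg hmj, sub_zero, coeff_fdb_neg_natCast_of_le d h_lead h_low (not_lt.mp hmj)]

theorem coeff_neg_natCast_eq_ite_iff {H : HahnSeries ℤ R} {j : ℕ} :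
    (∀ m : ℕ, H.coeff (-m) = if m = j then 1 else 0) ↔
      H.coeff (-(j : ℤ)) = 1 ∧ (∀ n : ℤ, n < -(j : ℤ) → H.coeff n = 0) ∧
        ∀ n : ℤ, -(j : ℤ) < n → n ≤ 0 → H.coeff n = 0 := by
  constructor
  · intro hH
    refine ⟨by simpa using hH j, fun n hn => ?_, fun n hn hn0 => ?_⟩ <;>
    · obtain ⟨m, rfl⟩ : ∃ m : ℕ, n = -m := ⟨(-n).toNat, by omega⟩
      simpa [show m ≠ j by omega] using hH m
  · rintro ⟨hlead, hlow, hmid⟩ m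
    split_ifs with hmj
    · simpa [hmj] using hlead
    · rcases lt_or_gt_of_ne hmj with hlt | hgt
      · exact hmid _ (by omega) (by omega)
      · exact hlow _ (by omega)

theorem current_exists_unique_general (d : R →+ R)
    (h : HahnSeries ℤ R)
    (h_monic : h.coeff (-1) = 1 ∧ h.coeff 0 = 0 ∧ ∀ n : ℤ, n < -1 → h.coeff n = 0)
    (j : ℕ) :
    ∃! H : HahnSeries ℤ R,
      (∃ c : ℕ → R, H = ∑ l ∈ Finset.range (j + 1), c l • fdb d h l) ∧
      H.coeff (-(j : ℤ)) = 1 ∧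
      (∀ n : ℤ, n < -(j : ℤ) → H.coeff n = 0) ∧
      (∀ n : ℤ, -(j : ℤ) < n → n ≤ 0 → H.coeff n = 0) := by
  obtain ⟨h_lead, -, h_low⟩ := h_monic
  simp only [← mem_fdbSpan_iff, ← coeff_neg_natCast_eq_ite_iff]
  obtain ⟨H, hH_mem, hH_coeff⟩ := exists_mem_fdbSpan_coeff_eq_ite h_lead h_low j
  refine ⟨H, ⟨hH_mem, hH_coeff⟩, fun H' ⟨hH'_mem, hH'_coeff⟩ => ?_⟩
  rw [← sub_eq_zero]
  refine eq_zero_of_mem_fdbSpan h_lead h_low (sub_mem hH'_mem hH_mem) fun k _ => ?_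
  rw [coeff_sub, hH'_coeff, hH_coeff, sub_self]

/-- for a monic Laurent series `h = z + Σ_{l≥1} h_l z^{-l}` and
each `j ≥ 0` there is a unique current `H⁽ʲ⁾ = Σ_{l=0}^j c_l^j h⁽ˡ⁾` (with the
`c_l^j` independent of `z`, i.e. in `R`) whose expansion is
`H⁽ʲ⁾ = z^j + Σ_{k≥1} H^j_k z^{-k}`. -/
theorem current_exists_unique (d : R →+ R)
    (hd : ∀ a b : R, d (a * b) = d a * b + a * d b)
    (h : HahnSeries ℤ R)
    (h_monic : h.coeff (-1) = 1 ∧ h.coeff 0 = 0 ∧ ∀ n : ℤ, n < -1 → h.coeff n = 0)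
    (j : ℕ) :
    ∃! H : HahnSeries ℤ R,
      (∃ c : ℕ → R, H = ∑ l ∈ Finset.range (j + 1), c l • fdb d h l) ∧
      H.coeff (-(j : ℤ)) = 1 ∧
      (∀ n : ℤ, n < -(j : ℤ) → H.coeff n = 0) ∧
      (∀ n : ℤ, -(j : ℤ) < n → n ≤ 0 → H.coeff n = 0) :=
  current_exists_unique_general d h h_monic j
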